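/- Let F = k[x,y]/(x^p − x, y^p − y) and set Y = y⊗1 + 1⊗y ∈ F ⊗_k F and u = ω(x)·(Y + ω(x))^{p−1} + ω(y) ∈ F ⊗_k F. Then u^p = u. -/

import Mathlib

set_option maxHeartbeats 2000000


noncomputable section

open scoped TensorProduct

/-- `ω(t) = Σ_{i=1}^{p-1} c_i (t^i ⊗ t^{p-i})` where `c_i` is the image in `k` of the
integer `(p-1)!/(i!(p-i)!)`. -/
def omg (p : ℕ) (k : Type) [Field k] {R : Type} [Ring R] [Algebra k R] (t : R) :
    TensorProduct k R R :=
  ∑ i ∈ Finset.Icc 1 (p - 1),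
    (((p - 1).factorial / (i.factorial * (p - i).factorial) : ℕ) : k) •
      ((t ^ i) ⊗ₜ[k] (t ^ (p - i)))

/-- The commutative algebra `F = k[x,y]/(x^p − x, y^p − y)`. -/
abbrev AlgF (p : ℕ) (k : Type) [Field k] :=
  MvPolynomial (Fin 2) k ⧸
    Ideal.span {(MvPolynomial.X 0 : MvPolynomial (Fin 2) k) ^ p - MvPolynomial.X 0,
      (MvPolynomial.X 1 : MvPolynomial (Fin 2) k) ^ p - MvPolynomial.X 1}

/-- The image of `x` in `F`. -/
def xF (p : ℕ) (k : Type) [Field k] : AlgF p k :=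
  Ideal.Quotient.mk _ (MvPolynomial.X 0)
/-- The image of `y` in `F`. -/
def yF (p : ℕ) (k : Type) [Field k] : AlgF p k :=
  Ideal.Quotient.mk _ (MvPolynomial.X 1)

/-- Let `F = k[x,y]/(x^p − x, y^p − y)`, `Y = y⊗1 + 1⊗y ∈ F ⊗_k F` and
`u = ω(x)·(Y + ω(x))^{p−1} + ω(y)`. Then `u^p = u`. -/
theorem u_pow_p_eq_u (p : ℕ) (hp : p.Prime) (k : Type) [Field k] [IsAlgClosed k] [CharP k p] :
    (omg p k (xF p k) *
        ((yF p k ⊗ₜ[k] (1 : AlgF p k) + (1 : AlgF p k) ⊗ₜ[k] yF p k) + omg p k (xF p k)) ^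
          (p - 1) +
      omg p k (yF p k)) ^ p =
    omg p k (xF p k) *
        ((yF p k ⊗ₜ[k] (1 : AlgF p k) + (1 : AlgF p k) ⊗ₜ[k] yF p k) + omg p k (xF p k)) ^
          (p - 1) +
      omg p k (yF p k) := by
  haveI : Fact p.Prime := ⟨hp⟩
  -- nontriviality of F ⊗ F via evaluation at 0
  set I : Ideal (MvPolynomial (Fin 2) k) :=
    Ideal.span {(MvPolynomial.X 0 : MvPolynomial (Fin 2) k) ^ p - MvPolynomial.X 0,
      (MvPolynomial.X 1 : MvPolynomial (Fin 2) k) ^ p - MvPolynomial.X 1} with hI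
  let φ : MvPolynomial (Fin 2) k →ₐ[k] k := MvPolynomial.aeval (fun _ => 0)
  have hφ : ∀ a ∈ I, φ a = 0 := by
    intro a ha
    have : I ≤ RingHom.ker φ.toRingHom := by
      rw [hI, Ideal.span_le]
      rintro q (rfl | rfl) <;>
        simp [RingHom.mem_ker, φ, hp.pos, zero_pow hp.ne_zero]
    exact this ha
  let ψF : AlgF p k →ₐ[k] k := Ideal.Quotient.liftₐ I φ hφ
  let ψ : (AlgF p k) ⊗[k] (AlgF p k) →ₐ[k] k :=
    Algebra.TensorProduct.lift ψF ψF (fun _ _ => Commute.all _ _)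
  haveI : Nontrivial ((AlgF p k) ⊗[k] (AlgF p k)) := ψ.toRingHom.domain_nontrivial
  haveI : CharP ((AlgF p k) ⊗[k] (AlgF p k)) p :=
    charP_of_injective_algebraMap' k p
  -- x^p = x and y^p = y
  have hx : xF p k ^ p = xF p k := by
    have h0 : (Ideal.Quotient.mk I) ((MvPolynomial.X 0 : MvPolynomial (Fin 2) k) ^ p
        - MvPolynomial.X 0) = 0 :=
      Ideal.Quotient.eq_zero_iff_mem.mpr (Ideal.subset_span (by simp))
    rw [map_sub, map_pow, sub_eq_zero] at h0
    exact h0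
  have hy : yF p k ^ p = yF p k := by
    have h0 : (Ideal.Quotient.mk I) ((MvPolynomial.X 1 : MvPolynomial (Fin 2) k) ^ p
        - MvPolynomial.X 1) = 0 :=
      Ideal.Quotient.eq_zero_iff_mem.mpr (Ideal.subset_span (by simp))
    rw [map_sub, map_pow, sub_eq_zero] at h0
    exact h0
  -- omg of a fixed point of Frobenius is a fixed point of Frobenius
  have homg : ∀ t : AlgF p k, t ^ p = t → (omg p k t) ^ p = omg p k t := by
    intro t ht
    rw [omg, sum_pow_char (R := AlgF p k ⊗[k] AlgF p k) p]
    refine Finset.sum_congr rfl fun i _ => ?_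
    rw [smul_pow, Algebra.TensorProduct.tmul_pow, ← pow_mul, ← pow_mul,
      mul_comm i p, mul_comm (p - i) p, pow_mul, pow_mul, ht]
    congr 1
    rw [← frobenius_def, map_natCast]
  have hw := homg _ hx
  have hv := homg _ hy
  have hadd : ∀ a b : (AlgF p k) ⊗[k] (AlgF p k), (a + b) ^ p = a ^ p + b ^ p :=
    fun a b => add_pow_char (p := p) a b
  have hmul : ∀ a b : (AlgF p k) ⊗[k] (AlgF p k), (a * b) ^ p = a ^ p * b ^ p :=
    fun a b => mul_pow a b p
  have hpow : ∀ a : (AlgF p k) ⊗[k] (AlgF p k), (a ^ (p - 1)) ^ p = (a ^ p) ^ (p - 1) :=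
    fun a => by rw [← pow_mul, mul_comm (p - 1) p, pow_mul]
  set Y : (AlgF p k) ⊗[k] (AlgF p k) :=
    yF p k ⊗ₜ[k] (1 : AlgF p k) + (1 : AlgF p k) ⊗ₜ[k] yF p k with hY
  have hone : (1 : AlgF p k) ^ p = 1 := one_pow p
  have hYp : Y ^ p = Y := by
    rw [hY, hadd, Algebra.TensorProduct.tmul_pow, Algebra.TensorProduct.tmul_pow,
      hone, hy]
  have hV : (Y + omg p k (xF p k)) ^ p = Y + omg p k (xF p k) := by
    rw [hadd, hYp, hw]
  rw [hadd, hmul, hw, hv, hpow, hV]
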